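/- For all i ≥ 2 and n ≥ 1, the last two symbols of f_n^[i] are 10 if n is even, and 01 if n is odd (for n ≥ 2; for n = 1 the word ends with 01 when i ≥ 2). -/
import Mathlib


/-- The (n,i)-Fibonacci words: f_0^[i] = 0, f_1^[i] = 0^{i-1} 1, f_n^[i] = f_{n-1}^[i] f_{n-2}^[i]. -/
def genFibWord (i : ℕ) : ℕ → List ℕ
  | 0 => [0]
  | 1 => List.replicate (i - 1) 0 ++ [1]
  | n + 2 => genFibWord i (n + 1) ++ genFibWord i n

theorem stmt_3 (i : ℕ) (hi : 2 ≤ i) (n : ℕ) (hn : 1 ≤ n) :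
    ∃ u : List ℕ, genFibWord i n = u ++ (if Even n then [1, 0] else [0, 1]) := by
  induction n using Nat.strong_induction_on with
  | _ n ih =>
    match n, hn with
    | 1, _ =>
      refine ⟨List.replicate (i - 2) 0, ?_⟩
      simp only [genFibWord]
      have : i - 1 = (i - 2) + 1 := by omega
      rw [this, List.replicate_succ']
      simp [Nat.even_iff]
    | 2, _ =>
      refine ⟨List.replicate (i - 1) 0, ?_⟩
      simp [genFibWord, Nat.even_iff]
    | (m + 3), _ =>
      obtain ⟨u, hu⟩ := ih (m + 1) (by omega) (by omega)
      refine ⟨genFibWord i (m + 2) ++ u, ?_⟩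
      have hpar : Even (m + 3) ↔ Even (m + 1) := by
        simp [Nat.even_add_one, Nat.even_iff]
      show genFibWord i (m + 2) ++ genFibWord i (m + 1) = _
      rw [hu]
      simp only [List.append_assoc]
      by_cases h : Even (m + 1)
      · rw [if_pos h, if_pos (hpar.mpr h)]
      · rw [if_neg h, if_neg (fun hc => h (hpar.mp hc))]
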